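/- Let f : ℝⁿ → ℝᵏ be linear with (1−ε)‖u−v‖² ≤ ‖f(u)−f(v)‖² ≤ (1+ε)‖u−v‖² for all u, v in a set Q containing 0, with ε ∈ (0,1/2). Then for all u, v ∈ Q, |⟨f(u), f(v)⟩ − ⟨u,v⟩| ≤ (3ε/2)·(‖u‖² + ‖v‖²); i.e., approximate distance preservation on Q ∪ {0} implies approximate inner-product preservation. -/

import Mathlib

/-! By polarization, `⟪a, b⟫ = (‖a‖² + ‖b‖² - ‖a - b‖²) / 2`, so the inner-product error
`⟪f u, f v⟫ - ⟪u, v⟫` is half a signed sum of the squared-distance errors on the three pairs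
`(u, 0)`, `(v, 0)`, `(u, v)`; each is at most `ε` times the corresponding squared distance, and
`‖u - v‖² ≤ 2 (‖u‖² + ‖v‖²)`. -/

open RealInnerProductSpace

theorem norm_sub_sq_le_two_mul_add {E : Type*} [SeminormedAddCommGroup E] (u v : E) :
    ‖u - v‖ ^ 2 ≤ 2 * (‖u‖ ^ 2 + ‖v‖ ^ 2) :=
  (pow_le_pow_left₀ (norm_nonneg _) (norm_sub_le u v) 2).trans add_sq_le

theorem abs_real_inner_sub_real_inner_le {E F : Type*}
    [NormedAddCommGroup E] [InnerProductSpace ℝ E] [NormedAddCommGroup F] [InnerProductSpace ℝ F]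
    (a b : F) (x y : E) :
    |⟪a, b⟫ - ⟪x, y⟫| ≤
      (|‖a‖ ^ 2 - ‖x‖ ^ 2| + |‖b‖ ^ 2 - ‖y‖ ^ 2| + |‖a - b‖ ^ 2 - ‖x - y‖ ^ 2|) / 2 := by
  have hpolar : ⟪a, b⟫ - ⟪x, y⟫ =
      ((‖a‖ ^ 2 - ‖x‖ ^ 2) + (‖b‖ ^ 2 - ‖y‖ ^ 2) - (‖a - b‖ ^ 2 - ‖x - y‖ ^ 2)) / 2 := by
    simp only [real_inner_eq_norm_mul_self_add_norm_mul_self_sub_norm_sub_mul_self_div_two, sq]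
    ring
  rw [hpolar, abs_div, abs_two]
  gcongr
  exact (abs_sub _ _).trans (by gcongr; exact abs_add_le _ _)

theorem abs_sub_le_mul_of_mul_le_of_le_mul {s t ε : ℝ} (hlow : (1 - ε) * t ≤ s) (hupp : s ≤ (1 + ε) * t) :
    |s - t| ≤ ε * t :=
  abs_sub_le_iff.mpr ⟨by linarith, by linarith⟩

/-- Approximate distance preservation on a set containing 0 by a linear map
implies approximate inner-product preservation. -/
theorem dist_preservation_implies_inner_preservation (n k : ℕ)
    (f : EuclideanSpace ℝ (Fin n) →ₗ[ℝ] EuclideanSpace ℝ (Fin k))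
    (Q : Set (EuclideanSpace ℝ (Fin n))) (h0 : (0 : EuclideanSpace ℝ (Fin n)) ∈ Q)
    (ε : ℝ) (hε : ε ∈ Set.Ioo (0 : ℝ) (1/2))
    (hf : ∀ u ∈ Q, ∀ v ∈ Q,
      (1 - ε) * ‖u - v‖ ^ 2 ≤ ‖f u - f v‖ ^ 2 ∧
      ‖f u - f v‖ ^ 2 ≤ (1 + ε) * ‖u - v‖ ^ 2) :
    ∀ u ∈ Q, ∀ v ∈ Q,
      |(inner ℝ (f u) (f v) : ℝ) - (inner ℝ u v : ℝ)| ≤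
        (3 * ε / 2) * (‖u‖ ^ 2 + ‖v‖ ^ 2) := by
  have herr : ∀ u ∈ Q, ∀ v ∈ Q, |‖f u - f v‖ ^ 2 - ‖u - v‖ ^ 2| ≤ ε * ‖u - v‖ ^ 2 :=
    fun u hu v hv => abs_sub_le_mul_of_mul_le_of_le_mul (hf u hu v hv).1 (hf u hu v hv).2
  intro u hu v hv
  have hu0 := herr u hu 0 h0
  have hv0 := herr v hv 0 h0
  simp only [map_zero, sub_zero] at hu0 hv0
  calc |⟪f u, f v⟫ - ⟪u, v⟫|
      ≤ (ε * ‖u‖ ^ 2 + ε * ‖v‖ ^ 2 + ε * ‖u - v‖ ^ 2) / 2 :=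
        (abs_real_inner_sub_real_inner_le _ _ _ _).trans (by gcongr; exact herr u hu v hv)
    _ ≤ (ε * ‖u‖ ^ 2 + ε * ‖v‖ ^ 2 + ε * (2 * (‖u‖ ^ 2 + ‖v‖ ^ 2))) / 2 := by
        gcongr
        · exact hε.1.le
        · exact norm_sub_sq_le_two_mul_add u v
    _ = 3 * ε / 2 * (‖u‖ ^ 2 + ‖v‖ ^ 2) := by ring
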